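/- For every t ∈ [0,1) and every x ∈ ℝ^d, the map x ↦ v*(x, t) is differentiable and its Jacobian satisfies ∇_x v*(x, t) = (t/(1−t²)²) Cov_t(x) − (t/(1−t²)) I_d. -/

import Mathlib

open MeasureTheory

/-- The Gaussian kernel `g_t(x, x₁) = exp(-‖x - t x₁‖² / (2(1-t²)))`. -/
noncomputable def gKer (d : ℕ) (t : ℝ) (x x₁ : EuclideanSpace ℝ (Fin d)) : ℝ :=
  Real.exp (-‖x - t • x₁‖ ^ 2 / (2 * (1 - t ^ 2)))

/-- `φ_t(x) = ∫ g_t(x, x₁) dπ₁(x₁)`. -/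
noncomputable def phiFn (d : ℕ) (π₁ : MeasureTheory.Measure (EuclideanSpace ℝ (Fin d))) (t : ℝ)
    (x : EuclideanSpace ℝ (Fin d)) : ℝ :=
  ∫ x₁, gKer d t x x₁ ∂π₁

/-- `m_t(x) = φ_t(x)⁻¹ ∫ x₁ g_t(x, x₁) dπ₁(x₁)`. -/
noncomputable def mFn (d : ℕ) (π₁ : MeasureTheory.Measure (EuclideanSpace ℝ (Fin d))) (t : ℝ)
    (x : EuclideanSpace ℝ (Fin d)) : EuclideanSpace ℝ (Fin d) :=
  (phiFn d π₁ t x)⁻¹ • ∫ x₁, gKer d t x x₁ • x₁ ∂π₁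

/-- The velocity field `v*(x, t) = (1/(1-t²)) m_t(x) - (t/(1-t²)) x`. -/
noncomputable def vStar (d : ℕ) (π₁ : MeasureTheory.Measure (EuclideanSpace ℝ (Fin d)))
    (x : EuclideanSpace ℝ (Fin d)) (t : ℝ) : EuclideanSpace ℝ (Fin d) :=
  (1 / (1 - t ^ 2)) • mFn d π₁ t x - (t / (1 - t ^ 2)) • x

/-- `M_t(x) = φ_t(x)⁻¹ ∫ x₁ x₁ᵀ g_t(x, x₁) dπ₁(x₁)` as a `d × d` matrix. -/
noncomputable def MMat (d : ℕ) (π₁ : MeasureTheory.Measure (EuclideanSpace ℝ (Fin d))) (t : ℝ)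
    (x : EuclideanSpace ℝ (Fin d)) : Matrix (Fin d) (Fin d) ℝ :=
  Matrix.of fun i j => (phiFn d π₁ t x)⁻¹ * ∫ x₁, gKer d t x x₁ * (x₁ i * x₁ j) ∂π₁

/-- The conditional covariance `Cov_t(x) = M_t(x) - m_t(x) m_t(x)ᵀ`. -/
noncomputable def covMat (d : ℕ) (π₁ : MeasureTheory.Measure (EuclideanSpace ℝ (Fin d))) (t : ℝ)
    (x : EuclideanSpace ℝ (Fin d)) : Matrix (Fin d) (Fin d) ℝ :=
  MMat d π₁ t x - Matrix.of fun i j => mFn d π₁ t x i * mFn d π₁ t x j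

/-!
Since `∇ₓ g_t(x, x₁) = -(x - t x₁) g_t(x, x₁) / (1 - t²)`, and `g_t ≤ 1` while `π₁` has bounded
support, `φ_t` and `∫ x₁ g_t(·, x₁) dπ₁` may be differentiated under the integral sign. In the
quotient rule for `m_t = (∫ x₁ g_t dπ₁) / φ_t` the terms carrying `x` cancel, leaving
`∂ₕ m_t = (t / (1 - t²)) Cov_t h`; the Jacobian of `v*` follows by linearity.
-/

open scoped RealInnerProductSpace

noncomputable def gKerDeriv (d : ℕ) (t : ℝ) (y x₁ : EuclideanSpace ℝ (Fin d)) :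
    EuclideanSpace ℝ (Fin d) →L[ℝ] ℝ :=
  (-(1 - t ^ 2)⁻¹ * gKer d t y x₁) • innerSL ℝ (y - t • x₁)

section Kernel

variable {d : ℕ} {t : ℝ}

lemma gKer_pos (y x₁ : EuclideanSpace ℝ (Fin d)) : 0 < gKer d t y x₁ := Real.exp_pos _

lemma gKer_le_one (ht : t ^ 2 < 1) (y x₁ : EuclideanSpace ℝ (Fin d)) : gKer d t y x₁ ≤ 1 := by
  rw [gKer, Real.exp_le_one_iff]
  exact div_nonpos_of_nonpos_of_nonneg (by simp) (by linarith)

lemma continuous_gKer (y : EuclideanSpace ℝ (Fin d)) : Continuous (gKer d t y) := by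
  unfold gKer; fun_prop

lemma continuous_gKerDeriv (y : EuclideanSpace ℝ (Fin d)) : Continuous (gKerDeriv d t y) := by
  unfold gKerDeriv
  exact ((continuous_gKer y).const_mul _).smul
    ((innerSL ℝ).continuous.comp (continuous_const.sub (continuous_const_smul t)))

lemma hasFDerivAt_gKer (x₁ y : EuclideanSpace ℝ (Fin d)) :
    HasFDerivAt (gKer d t · x₁) (gKerDeriv d t y x₁) y := by
  have h := (((((hasFDerivAt_id y).sub_const (t • x₁)).norm_sq).neg).mul_const
    (2 * (1 - t ^ 2))⁻¹).exp
  simp only [gKer, div_eq_mul_inv]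
  refine h.congr_fderiv ?_
  ext v
  simp only [gKerDeriv, gKer, div_eq_mul_inv, id_eq, Pi.neg_apply, mul_inv_rev, map_sub, map_smul,
    ContinuousLinearMap.comp_id, smul_neg, neg_apply, smul_apply, sub_apply, coe_innerSL_apply,
    smul_eq_mul, nsmul_eq_mul, Nat.cast_ofNat]
  ring_nf

lemma gKerDeriv_apply (y x₁ h : EuclideanSpace ℝ (Fin d)) :
    gKerDeriv d t y x₁ h = -(1 - t ^ 2)⁻¹ * gKer d t y x₁ * (⟪y, h⟫ - t * ⟪x₁, h⟫) := by
  simp [gKerDeriv]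

lemma norm_gKerDeriv_le (ht : t ^ 2 < 1) (y x₁ : EuclideanSpace ℝ (Fin d)) :
    ‖gKerDeriv d t y x₁‖ ≤ (1 - t ^ 2)⁻¹ * (‖y‖ + ‖x₁‖) := by
  have hc : 0 < 1 - t ^ 2 := by linarith
  have hcoef : ‖-(1 - t ^ 2)⁻¹ * gKer d t y x₁‖ ≤ (1 - t ^ 2)⁻¹ := by
    rw [norm_mul, norm_neg, Real.norm_of_nonneg (inv_pos.2 hc).le,
      Real.norm_of_nonneg (gKer_pos y x₁).le]
    exact mul_le_of_le_one_right (inv_pos.2 hc).le (gKer_le_one ht y x₁)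
  have hvec : ‖y - t • x₁‖ ≤ ‖y‖ + ‖x₁‖ := by
    have ht1 : |t| ≤ 1 := by rw [← sq_le_one_iff_abs_le_one]; linarith
    calc ‖y - t • x₁‖ ≤ ‖y‖ + |t| * ‖x₁‖ := by simpa [norm_smul] using norm_sub_le y (t • x₁)
      _ ≤ ‖y‖ + ‖x₁‖ := by gcongr; exact mul_le_of_le_one_left (norm_nonneg _) ht1
  calc ‖gKerDeriv d t y x₁‖ ≤ ‖-(1 - t ^ 2)⁻¹ * gKer d t y x₁‖ * ‖y - t • x₁‖ := by
        rw [gKerDeriv, norm_smul, innerSL_apply_norm]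
    _ ≤ (1 - t ^ 2)⁻¹ * (‖y‖ + ‖x₁‖) := by gcongr

end Kernel

lemma EuclideanSpace.integral_apply {α ι : Type*} [MeasurableSpace α] [Fintype ι] {μ : Measure α}
    {F : α → EuclideanSpace ℝ ι} (hF : Integrable F μ) (i : ι) :
    (∫ a, F a ∂μ) i = ∫ a, F a i ∂μ :=
  ((EuclideanSpace.proj i).integral_comp_comm hF).symm

lemma EuclideanSpace.norm_le_sqrt_card {ι : Type*} [Fintype ι] {x : EuclideanSpace ℝ ι}
    (hx : ∀ i, |x i| ≤ 1) : ‖x‖ ≤ √(Fintype.card ι) := by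
  rw [EuclideanSpace.norm_eq]
  gcongr
  calc ∑ i, ‖x i‖ ^ 2 ≤ ∑ _i : ι, (1 : ℝ) :=
        Finset.sum_le_sum fun i _ => pow_le_one₀ (norm_nonneg _) (hx i)
    _ = Fintype.card ι := by simp

section Integrals

variable {d : ℕ} {t R B : ℝ} {μ : Measure (EuclideanSpace ℝ (Fin d))}
  {G : Type*} [NormedAddCommGroup G] [NormedSpace ℝ G] {w : EuclideanSpace ℝ (Fin d) → G}

lemma aestronglyMeasurable_gKerDeriv_smulRight (hw : AEStronglyMeasurable w μ)
    (x : EuclideanSpace ℝ (Fin d)) :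
    AEStronglyMeasurable (fun x₁ => (gKerDeriv d t x x₁).smulRight (w x₁)) μ :=
  isBoundedBilinearMap_smulRight.continuous.comp_aestronglyMeasurable
    ((continuous_gKerDeriv x).aestronglyMeasurable.prodMk hw)

lemma ae_norm_gKerDeriv_smulRight_le (ht : t ^ 2 < 1) (hR : ∀ᵐ x₁ ∂μ, ‖x₁‖ ≤ R)
    (hwB : ∀ᵐ x₁ ∂μ, ‖w x₁‖ ≤ B) (x : EuclideanSpace ℝ (Fin d)) :
    ∀ᵐ x₁ ∂μ, ∀ y ∈ Metric.ball x 1,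
      ‖(gKerDeriv d t y x₁).smulRight (w x₁)‖ ≤ (1 - t ^ 2)⁻¹ * (‖x‖ + 1 + R) * B := by
  filter_upwards [hR, hwB] with x₁ hx₁ hwx₁ y hy
  have hy : ‖y‖ ≤ ‖x‖ + 1 := by
    have := norm_le_norm_add_norm_sub' y x
    rw [← dist_eq_norm] at this
    linarith [Metric.mem_ball.1 hy]
  rw [ContinuousLinearMap.norm_smulRight_apply]
  calc ‖gKerDeriv d t y x₁‖ * ‖w x₁‖ ≤ (1 - t ^ 2)⁻¹ * (‖y‖ + ‖x₁‖) * B := by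
        gcongr
        exact norm_gKerDeriv_le ht y x₁
    _ ≤ (1 - t ^ 2)⁻¹ * (‖x‖ + 1 + R) * B := by
        have := (norm_nonneg _).trans hwx₁
        gcongr

variable [IsFiniteMeasure μ]

lemma integrable_gKer_smul (ht : t ^ 2 < 1) (hw : AEStronglyMeasurable w μ)
    (hwB : ∀ᵐ x₁ ∂μ, ‖w x₁‖ ≤ B) (y : EuclideanSpace ℝ (Fin d)) :
    Integrable (fun x₁ => gKer d t y x₁ • w x₁) μ := by
  refine .of_bound ((continuous_gKer y).aestronglyMeasurable.smul hw) B ?_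
  filter_upwards [hwB] with x₁ hx₁
  rw [norm_smul, Real.norm_of_nonneg (gKer_pos y x₁).le]
  exact (mul_le_of_le_one_left (norm_nonneg _) (gKer_le_one ht y x₁)).trans hx₁

lemma integrable_gKerDeriv_smulRight (ht : t ^ 2 < 1) (hR : ∀ᵐ x₁ ∂μ, ‖x₁‖ ≤ R)
    (hw : AEStronglyMeasurable w μ) (hwB : ∀ᵐ x₁ ∂μ, ‖w x₁‖ ≤ B) (x : EuclideanSpace ℝ (Fin d)) :
    Integrable (fun x₁ => (gKerDeriv d t x x₁).smulRight (w x₁)) μ := by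
  refine .of_bound (aestronglyMeasurable_gKerDeriv_smulRight hw x)
    ((1 - t ^ 2)⁻¹ * (‖x‖ + 1 + R) * B) ?_
  filter_upwards [ae_norm_gKerDeriv_smulRight_le ht hR hwB x] with x₁ h
  exact h x (Metric.mem_ball_self one_pos)

lemma hasFDerivAt_integral_gKer_smul [CompleteSpace G] (ht : t ^ 2 < 1)
    (hR : ∀ᵐ x₁ ∂μ, ‖x₁‖ ≤ R) (hw : AEStronglyMeasurable w μ) (hwB : ∀ᵐ x₁ ∂μ, ‖w x₁‖ ≤ B)
    (x : EuclideanSpace ℝ (Fin d)) :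
    HasFDerivAt (fun y => ∫ x₁, gKer d t y x₁ • w x₁ ∂μ)
      (∫ x₁, (gKerDeriv d t x x₁).smulRight (w x₁) ∂μ) x :=
  hasFDerivAt_integral_of_dominated_of_fderiv_le (Metric.ball_mem_nhds x one_pos)
    (.of_forall fun y => (integrable_gKer_smul ht hw hwB y).aestronglyMeasurable)
    (integrable_gKer_smul ht hw hwB x) (aestronglyMeasurable_gKerDeriv_smulRight hw x)
    (ae_norm_gKerDeriv_smulRight_le ht hR hwB x) (integrable_const _)
    (.of_forall fun x₁ y _ => (hasFDerivAt_gKer x₁ y).smul_const (w x₁))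

lemma integrable_gKer_smul_inner_smul (ht : t ^ 2 < 1) (hR : ∀ᵐ x₁ ∂μ, ‖x₁‖ ≤ R)
    (hw : AEStronglyMeasurable w μ) (hwB : ∀ᵐ x₁ ∂μ, ‖w x₁‖ ≤ B) (y h : EuclideanSpace ℝ (Fin d)) :
    Integrable (fun x₁ => gKer d t y x₁ • (⟪x₁, h⟫ • w x₁)) μ := by
  refine integrable_gKer_smul (w := fun x₁ => ⟪x₁, h⟫ • w x₁) (B := R * ‖h‖ * B) ht
    ((continuous_id.inner continuous_const).aestronglyMeasurable.smul hw) ?_ y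
  filter_upwards [hR, hwB] with x₁ hx₁ hwx₁
  have := (norm_nonneg _).trans hx₁
  rw [norm_smul]
  gcongr
  exact (norm_inner_le_norm x₁ h).trans (by gcongr)

lemma integral_gKerDeriv_smulRight_apply [CompleteSpace G] (ht : t ^ 2 < 1)
    (hR : ∀ᵐ x₁ ∂μ, ‖x₁‖ ≤ R) (hw : AEStronglyMeasurable w μ) (hwB : ∀ᵐ x₁ ∂μ, ‖w x₁‖ ≤ B)
    (x h : EuclideanSpace ℝ (Fin d)) :
    (∫ x₁, (gKerDeriv d t x x₁).smulRight (w x₁) ∂μ) h =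
      -(1 - t ^ 2)⁻¹ • (⟪x, h⟫ • ∫ x₁, gKer d t x x₁ • w x₁ ∂μ
        - t • ∫ x₁, gKer d t x x₁ • (⟪x₁, h⟫ • w x₁) ∂μ) := by
  have hpt : ∀ x₁, (gKerDeriv d t x x₁).smulRight (w x₁) h = -(1 - t ^ 2)⁻¹ •
      (⟪x, h⟫ • (gKer d t x x₁ • w x₁) - t • (gKer d t x x₁ • (⟪x₁, h⟫ • w x₁))) := by
    intro x₁
    rw [ContinuousLinearMap.smulRight_apply, gKerDeriv_apply]
    module
  rw [ContinuousLinearMap.integral_apply (integrable_gKerDeriv_smulRight ht hR hw hwB x)]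
  simp_rw [hpt]
  rw [integral_smul, integral_sub ((integrable_gKer_smul ht hw hwB x).fun_smul _)
    ((integrable_gKer_smul_inner_smul ht hR hw hwB x h).fun_smul _), integral_smul, integral_smul]

end Integrals

section Posterior

variable {d : ℕ} {t R : ℝ} {μ : Measure (EuclideanSpace ℝ (Fin d))} [IsFiniteMeasure μ]

lemma phiFn_pos [NeZero μ] (ht : t ^ 2 < 1) (x : EuclideanSpace ℝ (Fin d)) :
    0 < phiFn d μ t x := by
  have hint : Integrable (gKer d t x) μ := by
    simpa using integrable_gKer_smul (w := fun _ => (1 : ℝ)) ht aestronglyMeasurable_const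
      (.of_forall fun _ => norm_one.le) x
  rw [phiFn, integral_pos_iff_support_of_nonneg (fun x₁ => (gKer_pos x x₁).le) hint,
    Function.support_eq_univ fun x₁ => (gKer_pos x x₁).ne']
  exact Measure.measure_univ_pos.2 (NeZero.ne μ)

lemma hasFDerivAt_phiFn (ht : t ^ 2 < 1) (hR : ∀ᵐ x₁ ∂μ, ‖x₁‖ ≤ R)
    (x : EuclideanSpace ℝ (Fin d)) :
    HasFDerivAt (phiFn d μ t) (∫ x₁, (gKerDeriv d t x x₁).smulRight (1 : ℝ) ∂μ) x := by
  have h := hasFDerivAt_integral_gKer_smul (w := fun _ => (1 : ℝ)) ht hR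
    aestronglyMeasurable_const (.of_forall fun _ => norm_one.le) x
  simp only [smul_eq_mul, mul_one] at h
  exact h

lemma hasFDerivAt_mFn [NeZero μ] (ht : t ^ 2 < 1) (hR : ∀ᵐ x₁ ∂μ, ‖x₁‖ ≤ R)
    (x : EuclideanSpace ℝ (Fin d)) :
    HasFDerivAt (mFn d μ t)
      ((phiFn d μ t x)⁻¹ • ∫ x₁, (gKerDeriv d t x x₁).smulRight x₁ ∂μ
        + (-(phiFn d μ t x ^ 2)⁻¹ • ∫ x₁, (gKerDeriv d t x x₁).smulRight (1 : ℝ) ∂μ).smulRight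
          (∫ x₁, gKer d t x x₁ • x₁ ∂μ)) x :=
  ((hasDerivAt_inv (phiFn_pos ht x).ne').comp_hasFDerivAt x (hasFDerivAt_phiFn ht hR x)).smul
    (hasFDerivAt_integral_gKer_smul (w := fun x₁ => x₁) ht hR aestronglyMeasurable_id hR x)

lemma inner_integral_gKer_smul_self (ht : t ^ 2 < 1) (hR : ∀ᵐ x₁ ∂μ, ‖x₁‖ ≤ R)
    (x h : EuclideanSpace ℝ (Fin d)) :
    ⟪∫ x₁, gKer d t x x₁ • x₁ ∂μ, h⟫ = ∫ x₁, gKer d t x x₁ * ⟪x₁, h⟫ ∂μ := by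
  rw [real_inner_comm,
    ← integral_inner (integrable_gKer_smul (w := fun x₁ => x₁) ht aestronglyMeasurable_id hR x)]
  simp_rw [real_inner_smul_right, real_inner_comm]

lemma fderiv_mFn_apply [NeZero μ] (ht : t ^ 2 < 1) (hR : ∀ᵐ x₁ ∂μ, ‖x₁‖ ≤ R)
    (x h : EuclideanSpace ℝ (Fin d)) :
    fderiv ℝ (mFn d μ t) x h = (t / (1 - t ^ 2)) •
      ((phiFn d μ t x)⁻¹ • ∫ x₁, gKer d t x x₁ • (⟪x₁, h⟫ • x₁) ∂μ
        - ⟪mFn d μ t x, h⟫ • mFn d μ t x) := by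
  have hφ := (phiFn_pos (μ := μ) ht x).ne'
  have hc : 1 - t ^ 2 ≠ 0 := by linarith
  have hφ_def : ∫ x₁, gKer d t x x₁ ∂μ = phiFn d μ t x := rfl
  rw [(hasFDerivAt_mFn ht hR x).fderiv]
  simp only [add_apply, smul_apply, ContinuousLinearMap.smulRight_apply]
  rw [integral_gKerDeriv_smulRight_apply (w := fun x₁ => x₁) ht hR aestronglyMeasurable_id hR,
    integral_gKerDeriv_smulRight_apply ht hR aestronglyMeasurable_const
      (.of_forall fun _ => norm_one.le)]
  simp only [mFn, real_inner_smul_left, inner_integral_gKer_smul_self ht hR, smul_eq_mul, mul_one,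
    hφ_def]
  match_scalars <;> field_simp
  ring

end Posterior

theorem jacobian_velocity_general
    (d : ℕ)
    (π₁ : Measure (EuclideanSpace ℝ (Fin d))) [IsProbabilityMeasure π₁]
    (hsupp : ∀ᵐ x₁ ∂π₁, ∀ i, x₁ i ∈ Set.Icc (0 : ℝ) 1)
    (t : ℝ) (ht : t ∈ Set.Ico (0 : ℝ) 1) (x : EuclideanSpace ℝ (Fin d)) :
    DifferentiableAt ℝ (fun y => vStar d π₁ y t) x ∧
    ∀ i j : Fin d,
      fderiv ℝ (fun y => vStar d π₁ y t) x (EuclideanSpace.single j 1) i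
        = ((t / (1 - t ^ 2) ^ 2) • covMat d π₁ t x
            - (t / (1 - t ^ 2)) • (1 : Matrix (Fin d) (Fin d) ℝ)) i j := by
  have ht2 : t ^ 2 < 1 := by nlinarith [ht.1, ht.2]
  have hR : ∀ᵐ x₁ ∂π₁, ‖x₁‖ ≤ √(Fintype.card (Fin d)) := by
    filter_upwards [hsupp] with x₁ hx₁
    exact EuclideanSpace.norm_le_sqrt_card fun i => abs_le.2 ⟨by linarith [(hx₁ i).1], (hx₁ i).2⟩
  have hv : HasFDerivAt (fun y => vStar d π₁ y t)
      ((1 / (1 - t ^ 2)) • fderiv ℝ (mFn d π₁ t) x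
        - (t / (1 - t ^ 2)) • ContinuousLinearMap.id ℝ (EuclideanSpace ℝ (Fin d))) x :=
    ((hasFDerivAt_mFn ht2 hR x).differentiableAt.hasFDerivAt.fun_const_smul _).fun_sub
      ((hasFDerivAt_id x).fun_const_smul _)
  refine ⟨hv.differentiableAt, fun i j => ?_⟩
  have hV : (∫ x₁, gKer d t x x₁ • (⟪x₁, EuclideanSpace.single j 1⟫ • x₁) ∂π₁) i
      = ∫ x₁, gKer d t x x₁ * (x₁ i * x₁ j) ∂π₁ := by
    rw [EuclideanSpace.integral_apply (integrable_gKer_smul_inner_smul (w := fun x₁ => x₁) ht2 hR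
      aestronglyMeasurable_id hR x _)]
    congr 1 with x₁
    simp only [PiLp.smul_apply, smul_eq_mul, EuclideanSpace.inner_single_right, one_mul,
      conj_trivial]
    ring
  rw [hv.fderiv]
  simp only [sub_apply, smul_apply, fderiv_mFn_apply ht2 hR, PiLp.sub_apply, PiLp.smul_apply]
  rw [hV]
  simp only [covMat, MMat, Matrix.sub_apply, Matrix.smul_apply, Matrix.of_apply, Matrix.one_apply,
    ContinuousLinearMap.id_apply, EuclideanSpace.inner_single_right, PiLp.single_apply, smul_eq_mul,
    one_mul, conj_trivial]
  generalize 1 - t ^ 2 = c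
  ring

/-- For every `t ∈ [0,1)` and every `x`, the map `x ↦ v*(x,t)` is differentiable and
its Jacobian is `∇ₓ v*(x,t) = (t/(1-t²)²) Cov_t(x) - (t/(1-t²)) I_d`. -/
theorem jacobian_velocity
    (d : ℕ) (hd : 1 ≤ d)
    (π₁ : Measure (EuclideanSpace ℝ (Fin d))) [IsProbabilityMeasure π₁]
    (hsupp : ∀ᵐ x₁ ∂π₁, ∀ i, x₁ i ∈ Set.Icc (0 : ℝ) 1)
    (t : ℝ) (ht : t ∈ Set.Ico (0 : ℝ) 1) (x : EuclideanSpace ℝ (Fin d)) :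
    DifferentiableAt ℝ (fun y => vStar d π₁ y t) x ∧
    ∀ i j : Fin d,
      fderiv ℝ (fun y => vStar d π₁ y t) x (EuclideanSpace.single j 1) i
        = ((t / (1 - t ^ 2) ^ 2) • covMat d π₁ t x
            - (t / (1 - t ^ 2)) • (1 : Matrix (Fin d) (Fin d) ℝ)) i j :=
  jacobian_velocity_general d π₁ hsupp t ht x
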